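/- A (d+1)-dimensional symmetric-side channel simulates a d-dimensional erasure channel: there is an isometric encoding V : ℂ^d → ℂ^{(d+1)(d+2)/2} into the input space of Λ_{ss,d+1} such that Λ_{ss,d+1}(V ρ V†) = Λ_{e,d}(ρ) for every density matrix ρ on ℂ^d (up to a fixed isometric identification of output spaces). -/

import Mathlib

/-! Encode `|i⟩` as the symmetric vector `(|i,d⟩ + |d,i⟩)/√2`; it lies in the symmetric subspace,
so it has a preimage under `U`, and these preimages are orthonormal because `U` is an isometry.
Tracing out the second factor of `(|i,d⟩ + |d,i⟩)(⟨j,d| + ⟨d,j|)/2` leaves `(|i⟩⟨j| + δᵢⱼ |d⟩⟨d|)/2`: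
the cross terms vanish because `i, j ≠ d`. Summing against `ρ` gives `(ρ + (tr ρ) |d⟩⟨d|)/2`. -/

open Matrix BigOperators ComplexOrder

/-- A density matrix: positive semidefinite with unit trace. -/
def IsDensityMatrix {n : Type*} [Fintype n] (ρ : Matrix n n ℂ) : Prop :=
  ρ.PosSemidef ∧ ρ.trace = 1

/-- Partial trace over the second tensor factor. -/
noncomputable def ptraceRight {n m : Type*} [Fintype m]
    (ρ : Matrix (n × m) (n × m) ℂ) : Matrix n n ℂ :=
  fun i j => ∑ k : m, ρ (i, k) (j, k)

/-- Embedding of a d×d matrix into the top-left block of a (d+1)×(d+1) matrix. -/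
def embedTL {d : ℕ} (ρ : Matrix (Fin d) (Fin d) ℂ) : Matrix (Fin (d + 1)) (Fin (d + 1)) ℂ :=
  fun i j => if h : i.val < d ∧ j.val < d then ρ ⟨i.val, h.1⟩ ⟨j.val, h.2⟩ else 0

/-- The rank-one projector |e⟩⟨e| onto the erasure flag |e⟩ = |d⟩. -/
def eFlag (d : ℕ) : Matrix (Fin (d + 1)) (Fin (d + 1)) ℂ :=
  fun i j => if i = Fin.last d ∧ j = Fin.last d then 1 else 0

theorem ptraceRight_mul_mul_conjTranspose_apply {ι n m : Type*} [Fintype ι] [Fintype m]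
    (W : Matrix (n × m) ι ℂ) (ρ : Matrix ι ι ℂ) (a b : n) :
    ptraceRight (W * ρ * Wᴴ) a b = ∑ i, ∑ j, ρ i j * ∑ k, W (a, k) i * star (W (b, k) j) := by
  simp only [ptraceRight, mul_apply, conjTranspose_apply, Finset.sum_mul, Finset.mul_sum]
  rw [Finset.sum_comm_cycle]
  refine Finset.sum_congr rfl fun i _ => ?_
  rw [Finset.sum_comm]
  exact Finset.sum_congr rfl fun j _ => Finset.sum_congr rfl fun k _ => by ring

theorem Matrix.exists_mul_eq_of_forall_exists_mulVec_eq {R m n ι : Type*} [CommSemiring R]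
    [Fintype n] (U : Matrix m n R) (W : Matrix m ι R) (h : ∀ i, ∃ v, U *ᵥ v = W.col i) :
    ∃ V : Matrix n ι R, U * V = W := by
  choose v hv using h
  refine ⟨of fun k i => v i k, ?_⟩
  ext p i
  exact congrFun (hv i) p

theorem Matrix.conjTranspose_mul_self_eq_of_mul_eq {m n ι : Type*} [Fintype m] [Fintype n]
    [DecidableEq n] {U : Matrix m n ℂ} {V : Matrix n ι ℂ} {W : Matrix m ι ℂ} (hU : Uᴴ * U = 1)
    (h : U * V = W) : Vᴴ * V = Wᴴ * W := by
  rw [← h, conjTranspose_mul, Matrix.mul_assoc, ← Matrix.mul_assoc Uᴴ, hU, Matrix.one_mul]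

section EmbedTL

variable {d : ℕ} (ρ : Matrix (Fin d) (Fin d) ℂ)

theorem embedTL_castSucc_castSucc (i j : Fin d) : embedTL ρ i.castSucc j.castSucc = ρ i j := by
  simp [embedTL]

theorem embedTL_last_left (b : Fin (d + 1)) : embedTL ρ (Fin.last d) b = 0 := by
  simp [embedTL]

theorem embedTL_last_right (a : Fin (d + 1)) : embedTL ρ a (Fin.last d) = 0 := by
  simp [embedTL]

theorem embedTL_apply_eq_sum (a b : Fin (d + 1)) :
    embedTL ρ a b = ∑ i, ∑ j, if a = i.castSucc ∧ b = j.castSucc then ρ i j else 0 := by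
  rcases Fin.eq_castSucc_or_eq_last a with ⟨i, rfl⟩ | rfl
  · rcases Fin.eq_castSucc_or_eq_last b with ⟨j, rfl⟩ | rfl
    · simp [embedTL_castSucc_castSucc, ite_and, Fin.castSucc_inj, Finset.sum_ite_eq]
    · simp [embedTL_last_right, (Fin.castSucc_ne_last _).symm]
  · simp [embedTL_last_left, (Fin.castSucc_ne_last _).symm]

theorem trace_mul_eFlag_apply (a b : Fin (d + 1)) :
    ρ.trace * eFlag d a b =
      ∑ i, ∑ j, if a = Fin.last d ∧ b = Fin.last d ∧ i = j then ρ i j else 0 := by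
  by_cases hab : a = Fin.last d ∧ b = Fin.last d
  · simp [eFlag, hab, trace]
  · simp [eFlag, hab, ← and_assoc]

end EmbedTL

noncomputable def erasureEncoding (d : ℕ) : Matrix (Fin (d + 1) × Fin (d + 1)) (Fin d) ℂ :=
  fun p i => (Real.sqrt 2 : ℂ)⁻¹ *
    ((if p = (i.castSucc, Fin.last d) then 1 else 0) + (if p = (Fin.last d, i.castSucc) then 1 else 0))

namespace erasureEncoding

variable {d : ℕ}

theorem apply_swap (a b : Fin (d + 1)) (i : Fin d) :
    erasureEncoding d (a, b) i = erasureEncoding d (b, a) i := by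
  simp only [erasureEncoding, Prod.mk.injEq, and_comm, add_comm]

theorem sum_mul_star (i j : Fin d) (a b : Fin (d + 1)) :
    ∑ k, erasureEncoding d (a, k) i * star (erasureEncoding d (b, k) j) =
      2⁻¹ * ((if a = i.castSucc ∧ b = j.castSucc then 1 else 0) +
        (if a = Fin.last d ∧ b = Fin.last d ∧ i = j then 1 else 0)) := by
  have hsqrt : (Real.sqrt 2 : ℂ)⁻¹ * (Real.sqrt 2 : ℂ)⁻¹ = 2⁻¹ := by
    rw [← mul_inv, ← Complex.ofReal_mul, Real.mul_self_sqrt zero_le_two, Complex.ofReal_ofNat]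
  have hne (m : Fin d) : Fin.last d ≠ m.castSucc := (Fin.castSucc_ne_last m).symm
  simp only [erasureEncoding, Prod.mk.injEq, ite_and, mul_add, mul_ite, mul_one, mul_zero, star_add,
    RCLike.star_def, apply_ite (starRingEnd ℂ), map_inv₀, Complex.conj_ofReal, map_zero, add_mul,
    ite_mul, hsqrt, zero_mul, Finset.sum_add_distrib, Finset.sum_ite_irrel, Finset.sum_ite_eq',
    Finset.mem_univ, ↓reduceIte, hne, ite_self, add_zero, Finset.sum_const_zero,
    Fin.castSucc_ne_last, Fin.castSucc_inj, eq_comm (a := j), zero_add]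
  split_ifs <;> rfl

theorem conjTranspose_mul_self : (erasureEncoding d)ᴴ * erasureEncoding d = 1 := by
  ext i j
  have hdiag (a : Fin (d + 1)) :
      ∑ k, star (erasureEncoding d (a, k) i) * erasureEncoding d (a, k) j =
        2⁻¹ * ((if a = j.castSucc ∧ a = i.castSucc then 1 else 0) +
          (if a = Fin.last d ∧ a = Fin.last d ∧ j = i then 1 else 0)) := by
    simp_rw [mul_comm (star _), sum_mul_star]
  rw [mul_apply, Fintype.sum_prod_type]
  simp only [conjTranspose_apply, hdiag]
  by_cases hij : i = j
  · subst hij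
    simp only [and_self, and_true, ← Finset.mul_sum, Finset.sum_add_distrib, Finset.sum_ite_eq',
      Finset.mem_univ, ↓reduceIte, one_apply_eq]
    norm_num
  · simp only [Ne.symm hij, and_false, if_false, add_zero, one_apply_ne hij]
    exact Finset.sum_eq_zero fun a _ => by
      rw [if_neg fun h => hij (Fin.castSucc_injective _ (h.2.symm.trans h.1)), mul_zero]

theorem ptraceRight_mul_mul_conjTranspose (ρ : Matrix (Fin d) (Fin d) ℂ) :
    ptraceRight (erasureEncoding d * ρ * (erasureEncoding d)ᴴ) =
      (1 / 2 : ℂ) • (embedTL ρ + ρ.trace • eFlag d) := by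
  ext a b
  simp only [ptraceRight_mul_mul_conjTranspose_apply, Matrix.smul_apply, Matrix.add_apply,
    smul_eq_mul, embedTL_apply_eq_sum, trace_mul_eFlag_apply, sum_mul_star, Finset.mul_sum,
    ← Finset.sum_add_distrib]
  refine Finset.sum_congr rfl fun i _ => Finset.sum_congr rfl fun j _ => ?_
  split_ifs <;> ring

end erasureEncoding

theorem ss_channel_simulates_erasure_channel_general (d : ℕ)
    (U : Matrix (Fin (d + 1) × Fin (d + 1)) (Fin ((d + 1) * (d + 2) / 2)) ℂ)
    (hIso : Uᴴ * U = 1)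
    (hOnto : ∀ w : Fin (d + 1) × Fin (d + 1) → ℂ,
      (∀ i j : Fin (d + 1), w (i, j) = w (j, i)) → ∃ v, U.mulVec v = w) :
    ∃ V : Matrix (Fin ((d + 1) * (d + 2) / 2)) (Fin d) ℂ,
      Vᴴ * V = 1 ∧
      ∀ ρ : Matrix (Fin d) (Fin d) ℂ, IsDensityMatrix ρ →
        ptraceRight (U * (V * ρ * Vᴴ) * Uᴴ)
          = (1 / 2 : ℂ) • embedTL ρ + (1 / 2 : ℂ) • eFlag d := by
  obtain ⟨V, hUV⟩ := U.exists_mul_eq_of_forall_exists_mulVec_eq (erasureEncoding d)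
    fun i => hOnto _ fun a b => erasureEncoding.apply_swap a b i
  refine ⟨V, ?_, fun ρ hρ => ?_⟩
  · rw [conjTranspose_mul_self_eq_of_mul_eq hIso hUV, erasureEncoding.conjTranspose_mul_self]
  have hconj : U * (V * ρ * Vᴴ) * Uᴴ = erasureEncoding d * ρ * (erasureEncoding d)ᴴ := by
    rw [← hUV, conjTranspose_mul]
    simp only [Matrix.mul_assoc]
  rw [hconj, erasureEncoding.ptraceRight_mul_mul_conjTranspose, hρ.2, one_smul, smul_add]

/-- A (d+1)-dimensional symmetric-side channel simulates a d-dimensional erasure channel: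
    if U is an isometry of ℂ^{(d+1)(d+2)/2} onto the symmetric subspace of
    ℂ^{d+1} ⊗ ℂ^{d+1}, there is an isometric encoding V : ℂ^d → ℂ^{(d+1)(d+2)/2} with
    Λ_{ss,d+1}(VρV†) = (1/2)ρ + (1/2)|e⟩⟨e| for every density matrix ρ on ℂ^d. -/
theorem ss_channel_simulates_erasure_channel (d : ℕ)
    (U : Matrix (Fin (d + 1) × Fin (d + 1)) (Fin ((d + 1) * (d + 2) / 2)) ℂ)
    (hIso : Uᴴ * U = 1)
    (hRangeSym : ∀ v : Fin ((d + 1) * (d + 2) / 2) → ℂ, ∀ i j : Fin (d + 1),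
      U.mulVec v (i, j) = U.mulVec v (j, i))
    (hOnto : ∀ w : Fin (d + 1) × Fin (d + 1) → ℂ,
      (∀ i j : Fin (d + 1), w (i, j) = w (j, i)) → ∃ v, U.mulVec v = w) :
    ∃ V : Matrix (Fin ((d + 1) * (d + 2) / 2)) (Fin d) ℂ,
      Vᴴ * V = 1 ∧
      ∀ ρ : Matrix (Fin d) (Fin d) ℂ, IsDensityMatrix ρ →
        ptraceRight (U * (V * ρ * Vᴴ) * Uᴴ)
          = (1 / 2 : ℂ) • embedTL ρ + (1 / 2 : ℂ) • eFlag d :=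
  ss_channel_simulates_erasure_channel_general d U hIso hOnto
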